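/- arXiv:1503.05381 — 2 statements merged into one kernel-verified Lean document; each statement's English description precedes it below -/
import Mathlib

section
/- Let μ be a probability measure on ℝ^d, {D_t} a family of trimmed regions for μ, and g: ℝ^d → [0,∞) Borel and square-integrable w.r.t. μ. For 0 < s < t < 1, the Lebesgue–Stieltjes integral of G_v² with respect to the nonincreasing continuous function v ↦ μ_v = μ(Q_v) over [s,t] satisfies −∫_s^t G_v² dμ_v = ∫_{D_t \ D_s} G_{τ(x)}² μ(dx). -/
/-!
On `D_t \ D_s = τ⁻¹ (s, t]` the push-forward of `μ` under `τ` is the Stieltjes measure of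
`−μ_·` restricted to `(s, t]`: both give an interval `(a, b]` the mass
`μ (D_b \ D_a) = μ_a − μ_b`. The identity is then the change of variables `v = τ x`; the
integrand is measurable because `G` is a quotient of two monotone functions of `v`.
-/

open MeasureTheory Set Real Filter

noncomputable section

/-- A family of *trimmed regions* for a probability measure `μ` on `ℝ^d`:
closed sets `D t`, `t ∈ [0,1]`, nondecreasing, with `μ (D 0) = 0`, `μ (D t) < 1`
for `t < 1`, `D 1 = ℝ^d`, left jumps `μ`-null, and right-continuity. -/
structure TrimmedFamily (d : ℕ) (μ : Measure (Fin d → ℝ)) : Type where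
  D : ℝ → Set (Fin d → ℝ)
  isClosed : ∀ t ∈ Icc (0:ℝ) 1, IsClosed (D t)
  mono : ∀ s t : ℝ, 0 ≤ s → s ≤ t → t ≤ 1 → D s ⊆ D t
  null_zero : μ (D 0) = 0
  meas_lt_one : ∀ t : ℝ, 0 ≤ t → t < 1 → μ (D t) < 1
  one_eq_univ : D 1 = univ
  left_jump_null : ∀ t : ℝ, 0 < t → t ≤ 1 → μ (D t \ ⋃ s ∈ Ico (0:ℝ) t, D s) = 0
  right_cont : ∀ t : ℝ, 0 ≤ t → t < 1 → D t = ⋂ s ∈ Ioc t (1:ℝ), D s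

namespace TrimmedFamily

variable {d : ℕ} {μ : Measure (Fin d → ℝ)} (T : TrimmedFamily d μ)

/-- `Q t = ℝ^d \ D t`. -/
def Q (t : ℝ) : Set (Fin d → ℝ) := (T.D t)ᶜ

/-- `τ(x) = inf {t ∈ [0,1] : x ∈ D t}`. -/
def tau (x : Fin d → ℝ) : ℝ := sInf {t | t ∈ Icc (0:ℝ) 1 ∧ x ∈ T.D t}

/-- `μ_t = μ(Q_t)` (as a real number). -/
def muQ (t : ℝ) : ℝ := (μ (T.Q t)).toReal

/-- `G_t = (1/μ(Q_t)) ∫_{Q_t} g dμ`. -/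
def G (g : (Fin d → ℝ) → ℝ) (t : ℝ) : ℝ := (∫ y in T.Q t, g y ∂μ) / T.muQ t

end TrimmedFamily

/-- The entropy `Ent_μ g = ∫ g log g dμ − (∫ g dμ) log (∫ g dμ)`
(with the convention `0 log 0 = 0`, which is automatic since `Real.log 0 = 0`). -/
def entropy {α : Type*} [MeasurableSpace α] (μ : Measure α) (g : α → ℝ) : ℝ :=
  (∫ x, g x * Real.log (g x) ∂μ) - (∫ x, g x ∂μ) * Real.log (∫ x, g x ∂μ)

namespace TrimmedFamily

variable {d : ℕ} {μ : Measure (Fin d → ℝ)} (T : TrimmedFamily d μ)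

lemma tau_nonneg (x : Fin d → ℝ) : 0 ≤ T.tau x :=
  le_csInf ⟨1, ⟨zero_le_one, le_rfl⟩, T.one_eq_univ ▸ mem_univ x⟩ fun _ h => h.1.1

lemma tau_le_one (x : Fin d → ℝ) : T.tau x ≤ 1 :=
  csInf_le ⟨0, fun _ h => h.1.1⟩ ⟨⟨zero_le_one, le_rfl⟩, T.one_eq_univ ▸ mem_univ x⟩

lemma tau_le_iff {x : Fin d → ℝ} {u : ℝ} (hu₀ : 0 ≤ u) (hu₁ : u < 1) :
    T.tau x ≤ u ↔ x ∈ T.D u := by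
  have hbdd : BddBelow {t | t ∈ Icc (0:ℝ) 1 ∧ x ∈ T.D t} := ⟨0, fun _ h => h.1.1⟩
  refine ⟨fun h => ?_, fun h => csInf_le hbdd ⟨⟨hu₀, hu₁.le⟩, h⟩⟩
  rw [T.right_cont u hu₀ hu₁, mem_iInter₂]
  intro v hv
  obtain ⟨w, ⟨hw, hxw⟩, hwv⟩ := (csInf_lt_iff hbdd
    ⟨1, ⟨zero_le_one, le_rfl⟩, T.one_eq_univ ▸ mem_univ x⟩).mp (h.trans_lt hv.1)
  exact T.mono w v hw.1 hwv.le hv.2 hxw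

lemma measurable_tau : Measurable T.tau := by
  refine measurable_of_Iic fun c => ?_
  rcases lt_or_ge c 0 with hc₀ | hc₀
  · convert MeasurableSet.empty
    exact eq_empty_of_forall_notMem fun x hx => (hc₀.trans_le (T.tau_nonneg x)).not_ge hx
  rcases lt_or_ge c 1 with hc₁ | hc₁
  · convert (T.isClosed c ⟨hc₀, hc₁.le⟩).measurableSet
    ext x
    exact T.tau_le_iff hc₀ hc₁
  · convert MeasurableSet.univ
    exact eq_univ_of_forall fun x => (T.tau_le_one x).trans hc₁

lemma preimage_tau_Ioc {a b : ℝ} (ha₀ : 0 ≤ a) (ha₁ : a < 1) (hb₀ : 0 ≤ b) (hb₁ : b < 1) :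
    T.tau ⁻¹' Ioc a b = T.D b \ T.D a := by
  ext x
  rw [mem_preimage, mem_Ioc, Set.mem_sdiff, ← T.tau_le_iff ha₀ ha₁, ← T.tau_le_iff hb₀ hb₁,
    not_le, and_comm]

lemma Q_antitoneOn : AntitoneOn T.Q (Icc 0 1) := fun u hu v hv huv =>
  compl_subset_compl.mpr (T.mono u v hu.1 huv hv.2)

lemma measure_Q_eq_add {a b : ℝ} (ha₀ : 0 ≤ a) (hab : a ≤ b) (hb₁ : b ≤ 1) :
    μ (T.Q a) = μ (T.D b \ T.D a) + μ (T.Q b) := by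
  have hQ : T.Q b ⊆ T.Q a := T.Q_antitoneOn ⟨ha₀, hab.trans hb₁⟩ ⟨ha₀.trans hab, hb₁⟩ hab
  have hQb : MeasurableSet (T.Q b) := (T.isClosed b ⟨ha₀.trans hab, hb₁⟩).measurableSet.compl
  rw [← measure_sdiff_add_inter (T.Q a) hQb, inter_eq_right.mpr hQ]
  exact congrArg (μ · + μ (T.Q b)) compl_sdiff_compl

lemma muQ_sub_muQ [IsFiniteMeasure μ] {a b : ℝ} (ha₀ : 0 ≤ a) (hab : a ≤ b) (hb₁ : b ≤ 1) :
    T.muQ a - T.muQ b = (μ (T.D b \ T.D a)).toReal := by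
  rw [muQ, muQ, T.measure_Q_eq_add ha₀ hab hb₁,
    ENNReal.toReal_add (measure_ne_top _ _) (measure_ne_top _ _), add_sub_cancel_right]

lemma muQ_antitoneOn [IsFiniteMeasure μ] : AntitoneOn T.muQ (Icc 0 1) := fun _ hu _ hv huv =>
  ENNReal.toReal_mono (measure_ne_top _ _) (measure_mono (T.Q_antitoneOn hu hv huv))

lemma setIntegral_Q_antitoneOn {g : (Fin d → ℝ) → ℝ} (hg : Integrable g μ)
    (hg₀ : ∀ x, 0 ≤ g x) : AntitoneOn (fun v => ∫ y in T.Q v, g y ∂μ) (Icc 0 1) :=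
  fun _ hu _ hv huv => setIntegral_mono_set hg.integrableOn (Eventually.of_forall hg₀)
    (T.Q_antitoneOn hu hv huv).eventuallyLE

lemma aemeasurable_G [IsFiniteMeasure μ] {g : (Fin d → ℝ) → ℝ} (hg : Integrable g μ)
    (hg₀ : ∀ x, 0 ≤ g x) (ν : Measure ℝ) : AEMeasurable (T.G g) (ν.restrict (Icc 0 1)) :=
  (aemeasurable_restrict_of_antitoneOn measurableSet_Icc (T.setIntegral_Q_antitoneOn hg hg₀)).div
    (aemeasurable_restrict_of_antitoneOn measurableSet_Icc T.muQ_antitoneOn)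

end TrimmedFamily

theorem StieltjesFunction.restrict_Ioc_eq_map {α : Type*} [MeasurableSpace α]
    (S : StieltjesFunction ℝ) {ν : Measure α} {τ : α → ℝ} (hτ : Measurable τ) {s t : ℝ}
    (h : ∀ a b, s ≤ a → a ≤ b → b ≤ t → ENNReal.ofReal (S b - S a) = ν (τ ⁻¹' Ioc a b)) :
    S.measure.restrict (Ioc s t) = (ν.restrict (τ ⁻¹' Ioc s t)).map τ := by
  refine Measure.ext_of_Ioc' _ _ (fun a b _ => ?_) fun a b _ => ?_
  · exact ((Measure.restrict_le_self _).trans_lt measure_Ioc_lt_top).ne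
  · rw [Measure.restrict_apply measurableSet_Ioc, Measure.map_apply hτ measurableSet_Ioc,
      Measure.restrict_apply (hτ measurableSet_Ioc), ← preimage_inter, Ioc_inter_Ioc]
    rcases le_or_gt (a ⊔ s) (b ⊓ t) with hle | hlt
    · rw [S.measure_Ioc, h _ _ le_sup_right hle inf_le_right]
    · rw [Ioc_eq_empty_of_le hlt.le, preimage_empty, measure_empty, measure_empty]

/-- The Lebesgue–Stieltjes integral `−∫_s^t G_v² dμ_v` with respect to the nonincreasing
continuous function `v ↦ μ_v` is encoded as `∫_{(s,t]} G_v² dS` for any Stieltjes function `S`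
agreeing with `−μ_·` on `[s,t]`. -/
theorem stieltjes_integral_G_sq_general
    {d : ℕ} (μ : Measure (Fin d → ℝ)) [IsProbabilityMeasure μ]
    (T : TrimmedFamily d μ) (g : (Fin d → ℝ) → ℝ)
    (hg_nonneg : ∀ x, 0 ≤ g x) (hg_sq : MemLp g 2 μ)
    (s t : ℝ) (hs : 0 < s) (hst : s < t) (ht : t < 1)
    (S : StieltjesFunction ℝ) (hS : ∀ v ∈ Icc s t, S v = - T.muQ v) :
    ∫ v in Ioc s t, (T.G g v) ^ 2 ∂S.measure
      = ∫ x in T.D t \ T.D s, (T.G g (T.tau x)) ^ 2 ∂μ := by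
  have hS_incr : ∀ a b, s ≤ a → a ≤ b → b ≤ t →
      ENNReal.ofReal (S b - S a) = μ (T.tau ⁻¹' Ioc a b) := by
    intro a b hsa hab hbt
    have ha₀ : 0 ≤ a := hs.le.trans hsa
    have hb₁ : b < 1 := hbt.trans_lt ht
    rw [hS a ⟨hsa, hab.trans hbt⟩, hS b ⟨hsa.trans hab, hbt⟩, neg_sub_neg,
      T.muQ_sub_muQ ha₀ hab hb₁.le, ENNReal.ofReal_toReal (measure_ne_top _ _),
      T.preimage_tau_Ioc ha₀ (hab.trans_lt hb₁) (ha₀.trans hab) hb₁]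
  have hG : AEStronglyMeasurable (fun v => T.G g v ^ 2) (S.measure.restrict (Ioc s t)) :=
    (((T.aemeasurable_G (hg_sq.integrable one_le_two) hg_nonneg S.measure).mono_measure
      (Measure.restrict_mono (Ioc_subset_Icc_self.trans (Icc_subset_Icc hs.le ht.le)) le_rfl)).pow_const
        2).aestronglyMeasurable
  rw [S.restrict_Ioc_eq_map T.measurable_tau hS_incr] at hG ⊢
  rw [integral_map T.measurable_tau.aemeasurable hG,
    T.preimage_tau_Ioc hs.le (hst.trans ht) (hs.le.trans hst.le) ht]

/-- Identity (10): `−∫_s^t G_v² dμ_v = ∫_{D_t \ D_s} G_{τ(x)}² μ(dx)`, `0 < s < t < 1`.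
The Lebesgue–Stieltjes integral w.r.t. the nonincreasing continuous function `v ↦ μ_v`
is encoded via any Stieltjes function `S` agreeing with `−μ_·` on `[s,t]`, so that
`−∫_s^t G_v² dμ_v = ∫_{(s,t]} G_v² dS`. -/
theorem stieltjes_integral_G_sq
    {d : ℕ} (μ : Measure (Fin d → ℝ)) [IsProbabilityMeasure μ]
    (T : TrimmedFamily d μ) (g : (Fin d → ℝ) → ℝ)
    (hg_meas : Measurable g) (hg_nonneg : ∀ x, 0 ≤ g x) (hg_sq : MemLp g 2 μ)
    (s t : ℝ) (hs : 0 < s) (hst : s < t) (ht : t < 1)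
    (S : StieltjesFunction ℝ) (hS : ∀ v ∈ Icc s t, S v = - T.muQ v) :
    ∫ v in Ioc s t, (T.G g v) ^ 2 ∂S.measure
      = ∫ x in T.D t \ T.D s, (T.G g (T.tau x)) ^ 2 ∂μ :=
  stieltjes_integral_G_sq_general μ T g hg_nonneg hg_sq s t hs hst ht S hS
end
end

section
/- Let μ be a probability measure on ℝ with everywhere positive density p_μ, and let {D_t} be the quantile trimmed regions with associated reflection map s and symmetric σ-algebra F̂. Then for every f ∈ L₂(ℝ, μ), the L₂-symmetrization f̂ = (E_μ[f²|F̂])^{1/2} satisfies f̂(x) = sqrt( (f²(x) + f²(s(x))) / 2 ) for μ-almost all x. -/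
/-!
With an everywhere positive density the cdf `F` is a continuous, strictly increasing
bijection of `ℝ` onto `(0, 1)` and the quantile function is its inverse. Then
`τ(x) = |2 F(x) - 1|`, so the reflection is `s = F⁻¹ ∘ (1 - F)`: a measurable involution
preserving `μ`. For any such `s`, the average `(g + g ∘ s) / 2` is `s`-invariant and has the
same integral as `g` over every `s`-invariant set, so it is the conditional expectation of `g`
given `F̂`; apply this to `g = f²`.
-/

open MeasureTheory Set Real Filter

noncomputable section

/-- The cumulative distribution function `F_μ(x) = μ((−∞,x])`. -/
def cdfR (μ : Measure ℝ) (x : ℝ) : ℝ := (μ (Iic x)).toReal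

/-- The quantile function `q_v = F_μ^{−1}(v)`. -/
def quantile (μ : Measure ℝ) (v : ℝ) : ℝ := sInf {x | v ≤ cdfR μ x}

/-- The quantile trimmed regions: `D_t = [q_{1/2−t/2}, q_{1/2+t/2}]` for `t ∈ [0,1)`
and `D_1 = ℝ`. -/
def DQ (μ : Measure ℝ) (t : ℝ) : Set ℝ :=
  if t < 1 then Icc (quantile μ (1/2 - t/2)) (quantile μ (1/2 + t/2)) else univ

/-- `τ(x) = inf {t ∈ [0,1] : x ∈ D_t}` for the quantile trimmed regions. -/
def tauQ (μ : Measure ℝ) (x : ℝ) : ℝ := sInf {t | t ∈ Icc (0:ℝ) 1 ∧ x ∈ DQ μ t}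

/-- The reflection map of the quantile trimmed regions: for `x ≠ m` (the median),
`s(x)` is the endpoint of `D_{τ(x)}` other than `x`, and `s(m) = m`. -/
def reflQ (μ : Measure ℝ) (x : ℝ) : ℝ :=
  if x < quantile μ (1/2) then quantile μ (1/2 + tauQ μ x / 2)
  else if quantile μ (1/2) < x then quantile μ (1/2 - tauQ μ x / 2)
  else quantile μ (1/2)

/-- The symmetric σ-algebra `F̂`: Borel sets `A` such that `x ∈ A ↔ s(x) ∈ A`. -/
def symmMS (s : ℝ → ℝ) : MeasurableSpace ℝ where
  MeasurableSet' A := MeasurableSet A ∧ ∀ x, x ∈ A ↔ s x ∈ A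
  measurableSet_empty := ⟨MeasurableSet.empty, fun _ => Iff.rfl⟩
  measurableSet_compl := by
    rintro A ⟨hA, h⟩
    exact ⟨hA.compl, fun x => by simp only [Set.mem_compl_iff]; exact not_congr (h x)⟩
  measurableSet_iUnion := by
    intro g hg
    refine ⟨MeasurableSet.iUnion fun i => (hg i).1, fun x => ?_⟩
    simp only [Set.mem_iUnion]
    exact exists_congr fun i => (hg i).2 x

open ProbabilityTheory

section SymmetricSigmaAlgebra

variable {s : ℝ → ℝ}

lemma symmMS_le : symmMS s ≤ (inferInstance : MeasurableSpace ℝ) := fun _ hA => hA.1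

lemma preimage_eq_of_measurableSet_symmMS {A : Set ℝ} (hA : MeasurableSet[symmMS s] A) :
    s ⁻¹' A = A :=
  ext fun x => (hA.2 x).symm

lemma measurable_symmMS_of_comp_eq {β : Type*} [MeasurableSpace β] {g : ℝ → β}
    (hg : Measurable g) (hgs : ∀ x, g (s x) = g x) : Measurable[symmMS s] g :=
  fun _ hB => ⟨hg hB, fun x => by simp only [mem_preimage, hgs]⟩

theorem condExp_symmMS_ae_eq {μ : Measure ℝ} [IsFiniteMeasure μ]
    (hs : MeasurePreserving s μ μ) (hinv : Function.Involutive s) {g : ℝ → ℝ}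
    (hg : Integrable g μ) :
    μ[g|symmMS s] =ᵐ[μ] fun x => (g x + g (s x)) / 2 := by
  have hgs : Integrable (fun x => g (s x)) μ := hs.integrable_comp_of_integrable hg
  refine (ae_eq_condExp_of_forall_setIntegral_eq (g := fun x => (g x + g (s x)) / 2) symmMS_le hg
    (fun _ _ _ => ((hg.add hgs).div_const 2).integrableOn) (fun A hA _ => ?_) ?_).symm
  · have hA_inv : ∫ x in A, g (s x) ∂μ = ∫ x in A, g x ∂μ := by
      conv_lhs => rw [← preimage_eq_of_measurableSet_symmMS hA]
      exact hs.setIntegral_preimage_emb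
        (MeasurableEquiv.ofInvolutive s hinv hs.measurable).measurableEmbedding g A
    rw [integral_div, integral_add hg.integrableOn hgs.integrableOn, hA_inv]
    ring
  · set g' := hg.1.mk g
    have hg' : Measurable g' := hg.1.stronglyMeasurable_mk.measurable
    have hs_meas := hs.measurable
    refine ⟨fun x => (g' x + g' (s x)) / 2,
      (measurable_symmMS_of_comp_eq (by fun_prop) fun x => ?_).stronglyMeasurable, ?_⟩
    · rw [hinv x, add_comm]
    · filter_upwards [hg.1.ae_eq_mk, hs.quasiMeasurePreserving.ae_eq_comp hg.1.ae_eq_mk]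
        with x hx hsx
      rw [hx, show g (s x) = g' (s x) from hsx]

end SymmetricSigmaAlgebra

section CDF

variable (μ : Measure ℝ) [IsProbabilityMeasure μ]

lemma cdfR_eq_cdf : cdfR μ = cdf μ :=
  funext fun x => (cdf_eq_real μ x).symm

lemma continuous_cdf [NullSingletonClass μ] : Continuous (cdf μ) := by
  refine continuous_iff_continuousAt.2 fun a => ?_
  rw [(monotone_cdf μ).continuousAt_iff_leftLim_eq_rightLim, (cdf μ).rightLim_eq]
  have h := (cdf μ).measure_singleton a
  rw [measure_cdf μ, measure_singleton, eq_comm, ENNReal.ofReal_eq_zero] at h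
  linarith [(monotone_cdf μ).leftLim_le (le_refl a)]

variable {μ}

lemma strictMono_cdf_of_absolutelyContinuous (h : volume ≪ μ) : StrictMono (cdf μ) := by
  intro a b hab
  have hIoc : μ (Ioc a b) ≠ 0 := mt (@h _) (by simp [Real.volume_Ioc, hab])
  rw [← measure_cdf μ, StieltjesFunction.measure_Ioc, ne_eq, ENNReal.ofReal_eq_zero] at hIoc
  linarith

lemma range_cdf_eq_Ioo [NullSingletonClass μ] (hF : StrictMono (cdf μ)) :
    range (cdf μ) = Ioo 0 1 := by
  refine Subset.antisymm ?_ fun v hv => ?_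
  · rintro _ ⟨x, rfl⟩
    exact ⟨(cdf_nonneg μ (x - 1)).trans_lt (hF (by linarith)),
      (hF (lt_add_one x)).trans_le (cdf_le_one μ (x + 1))⟩
  · obtain ⟨a, ha⟩ := ((tendsto_cdf_atBot μ).eventually_lt_const hv.1).exists
    obtain ⟨b, hb⟩ := ((tendsto_cdf_atTop μ).eventually_const_lt hv.2).exists
    exact intermediate_value_univ a b (continuous_cdf μ) ⟨ha.le, hb.le⟩

end CDF

section Reflection

variable {μ : Measure ℝ}

lemma quantile_cdfR (hF : StrictMono (cdfR μ)) (x : ℝ) : quantile μ (cdfR μ x) = x := by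
  have hset : {y | cdfR μ x ≤ cdfR μ y} = Ici x := ext fun _ => hF.le_iff_le
  rw [quantile, hset, csInf_Ici]

variable (hF : StrictMono (cdfR μ)) (hrange : range (cdfR μ) = Ioo 0 1)
include hF hrange

lemma cdfR_quantile {v : ℝ} (hv : v ∈ Ioo 0 1) : cdfR μ (quantile μ v) = v := by
  obtain ⟨x, rfl⟩ := hrange ▸ hv
  rw [quantile_cdfR hF]

lemma quantile_le_iff {v : ℝ} (hv : v ∈ Ioo 0 1) (x : ℝ) :
    quantile μ v ≤ x ↔ v ≤ cdfR μ x := by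
  obtain ⟨y, rfl⟩ := hrange ▸ hv
  rw [quantile_cdfR hF, hF.le_iff_le]

lemma le_quantile_iff {v : ℝ} (hv : v ∈ Ioo 0 1) (x : ℝ) :
    x ≤ quantile μ v ↔ cdfR μ x ≤ v := by
  obtain ⟨y, rfl⟩ := hrange ▸ hv
  rw [quantile_cdfR hF, hF.le_iff_le]

lemma mem_DQ_iff {t : ℝ} (ht : 0 ≤ t) (x : ℝ) :
    x ∈ DQ μ t ↔ |2 * cdfR μ x - 1| ≤ t := by
  have hx : cdfR μ x ∈ Ioo 0 1 := hrange ▸ mem_range_self x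
  unfold DQ
  split_ifs with ht1
  · rw [mem_Icc, quantile_le_iff hF hrange ⟨by linarith, by linarith⟩,
      le_quantile_iff hF hrange ⟨by linarith, by linarith⟩, abs_le]
    constructor <;> rintro ⟨h₁, h₂⟩ <;> constructor <;> linarith
  · simp only [mem_univ, true_iff]
    exact (abs_lt.2 ⟨by linarith [hx.1], by linarith [hx.2]⟩).le.trans (not_lt.1 ht1)

lemma tauQ_eq (x : ℝ) : tauQ μ x = |2 * cdfR μ x - 1| := by
  have hx : cdfR μ x ∈ Ioo 0 1 := hrange ▸ mem_range_self x
  have hset : {t | t ∈ Icc (0 : ℝ) 1 ∧ x ∈ DQ μ t} = Icc |2 * cdfR μ x - 1| 1 := by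
    ext t
    simp only [mem_ofPred_eq, mem_Icc]
    constructor
    · rintro ⟨⟨ht0, ht1⟩, hxt⟩
      exact ⟨(mem_DQ_iff hF hrange ht0 x).1 hxt, ht1⟩
    · rintro ⟨hct, ht1⟩
      have ht0 : 0 ≤ t := (abs_nonneg _).trans hct
      exact ⟨⟨ht0, ht1⟩, (mem_DQ_iff hF hrange ht0 x).2 hct⟩
  rw [tauQ, hset, csInf_Icc (abs_le.2 ⟨by linarith [hx.1], by linarith [hx.2]⟩)]

lemma reflQ_eq (x : ℝ) : reflQ μ x = quantile μ (1 - cdfR μ x) := by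
  have hm : cdfR μ (quantile μ (1 / 2)) = 1 / 2 :=
    cdfR_quantile hF hrange ⟨by norm_num, by norm_num⟩
  rw [reflQ, tauQ_eq hF hrange]
  rcases lt_trichotomy x (quantile μ (1 / 2)) with h | rfl | h
  · have hlt : cdfR μ x < 1 / 2 := hm ▸ hF h
    rw [if_pos h, abs_of_neg (by linarith)]
    ring_nf
  · simp only [lt_irrefl, if_false, hm]
    norm_num
  · have hgt : 1 / 2 < cdfR μ x := hm ▸ hF h
    rw [if_neg (not_lt.2 h.le), if_pos h, abs_of_pos (by linarith)]
    ring_nf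

lemma cdfR_reflQ (x : ℝ) : cdfR μ (reflQ μ x) = 1 - cdfR μ x := by
  have hx : cdfR μ x ∈ Ioo 0 1 := hrange ▸ mem_range_self x
  rw [reflQ_eq hF hrange, cdfR_quantile hF hrange ⟨by linarith [hx.2], by linarith [hx.1]⟩]

lemma reflQ_involutive : Function.Involutive (reflQ μ) := fun x => by
  rw [reflQ_eq hF hrange (reflQ μ x), cdfR_reflQ hF hrange, sub_sub_cancel, quantile_cdfR hF]

lemma reflQ_antitone : Antitone (reflQ μ) := fun x y hxy => by
  rw [← hF.le_iff_le, cdfR_reflQ hF hrange, cdfR_reflQ hF hrange]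
  linarith [hF.monotone hxy]

lemma reflQ_measurePreserving [IsProbabilityMeasure μ] [NullSingletonClass μ] :
    MeasurePreserving (reflQ μ) μ μ := by
  have hmeas : Measurable (reflQ μ) := (reflQ_antitone hF hrange).measurable
  have : IsProbabilityMeasure (μ.map (reflQ μ)) :=
    Measure.isProbabilityMeasure_map hmeas.aemeasurable
  refine ⟨hmeas, Measure.eq_of_cdf _ _ (StieltjesFunction.ext fun a => ?_)⟩
  have hpre : reflQ μ ⁻¹' Iic a = Ici (reflQ μ a) := by
    ext y
    rw [mem_preimage, mem_Iic, mem_Ici, ← hF.le_iff_le, ← hF.le_iff_le (a := reflQ μ a),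
      cdfR_reflQ hF hrange, cdfR_reflQ hF hrange]
    constructor <;> intro h <;> linarith
  rw [cdf_eq_real, cdf_eq_real, map_measureReal_apply hmeas measurableSet_Iic, hpre, ← compl_Iio,
    probReal_compl_eq_one_sub measurableSet_Iio, measureReal_congr Iio_ae_eq_Iic]
  change 1 - cdfR μ (reflQ μ a) = cdfR μ a
  rw [cdfR_reflQ hF hrange]
  ring

end Reflection

/-- Identity (16): for the quantile trimmed regions, the `L₂`-symmetrization
`f̂ = (E_μ[f²|F̂])^{1/2}` of every `f ∈ L₂(μ)` satisfies
`f̂(x) = sqrt((f²(x) + f²(s(x)))/2)` for `μ`-almost all `x`. -/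
theorem symmetrization_eq_sqrt_mean
    (μ : Measure ℝ) [IsProbabilityMeasure μ]
    (pμ : ℝ → ℝ) (hpμ_pos : ∀ x, 0 < pμ x) (hpμ_meas : Measurable pμ)
    (hμ : μ = volume.withDensity fun x => ENNReal.ofReal (pμ x))
    (f : ℝ → ℝ) (hf : MemLp f 2 μ) :
    ∀ᵐ x ∂μ,
      Real.sqrt ((μ[(fun y => f y ^ 2)|symmMS (reflQ μ)]) x)
        = Real.sqrt ((f x ^ 2 + f (reflQ μ x) ^ 2) / 2) := by
  have hac : volume ≪ μ := hμ ▸ withDensity_absolutelyContinuous'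
    hpμ_meas.ennreal_ofReal.aemeasurable (ae_of_all _ fun x => by simpa using hpμ_pos x)
  have : NullSingletonClass μ := hμ ▸ inferInstance
  have hF : StrictMono (cdfR μ) := cdfR_eq_cdf μ ▸ strictMono_cdf_of_absolutelyContinuous hac
  have hrange : range (cdfR μ) = Ioo 0 1 :=
    cdfR_eq_cdf μ ▸ range_cdf_eq_Ioo (cdfR_eq_cdf μ ▸ hF)
  filter_upwards [condExp_symmMS_ae_eq (reflQ_measurePreserving hF hrange)
    (reflQ_involutive hF hrange) hf.integrable_sq] with x hx
  rw [hx]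
end
end
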